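/- arXiv:1901.09984 — 8 statements merged into one kernel-verified Lean document; each statement's English description precedes it below -/
import Mathlib

section
/- Any maximal solution of the HCV model with positive initial data at time t₀ is defined on all of [t₀, ∞), i.e., the solution is global in forward time. -/
open Set
open scoped NNReal

namespace HCVAux

noncomputable def cl (M x : ℝ) : ℝ := max 0 (min x M)

lemma cl_nonneg (M x : ℝ) : 0 ≤ cl M x := le_max_left _ _

lemma cl_le (M x : ℝ) (hM : 0 ≤ M) : cl M x ≤ M := max_le hM (min_le_right _ _)

lemma cl_le_self (M x : ℝ) (hx : 0 ≤ x) : cl M x ≤ x := max_le hx (min_le_left _ _)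

lemma cl_eq_self (M x : ℝ) (h0 : 0 ≤ x) (hM : x ≤ M) : cl M x = x := by
  rw [cl, min_eq_left hM, max_eq_right h0]

lemma cl_eq_zero (M x : ℝ) (hx : x ≤ 0) (hM : 0 ≤ M) : cl M x = 0 := by
  rw [cl, max_eq_left]
  exact le_trans (min_le_left _ _) hx

lemma cl_lip (M x y : ℝ) : |cl M x - cl M y| ≤ |x - y| := by
  rw [cl, cl, max_comm 0 (min x M), max_comm 0 (min y M)]
  refine le_trans (abs_max_sub_max_le_abs _ _ _) ?_
  refine le_trans (abs_min_sub_min_le_max x M y M) ?_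
  simp [abs_nonneg]

/-- helper product bound -/
lemma mul_bound {u U t D : ℝ} (h0 : 0 ≤ u) (hU : u ≤ U) (h1 : -D ≤ t) (h2 : t ≤ D)
    (hD : 0 ≤ D) : -(U * D) ≤ u * t ∧ u * t ≤ U * D := by
  constructor <;> nlinarith

/-- truncated vector field -/
noncomputable def fld (lam d delta c k q M : ℝ) (x : ℝ × ℝ × ℝ) : ℝ × ℝ × ℝ :=
  (lam - d * cl M x.1 - k * cl M x.2.2 * cl M x.1,
   k * cl M x.2.2 * cl M x.1 - delta * cl M x.2.1,
   q * cl M x.2.1 - c * cl M x.2.2)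

/-- true vector field -/
noncomputable def realF (lam d delta c k q : ℝ) (x : ℝ × ℝ × ℝ) : ℝ × ℝ × ℝ :=
  (lam - d * x.1 - k * x.2.2 * x.1,
   k * x.2.2 * x.1 - delta * x.2.1,
   q * x.2.1 - c * x.2.2)

lemma fld_eq_realF (lam d delta c k q M : ℝ) (x : ℝ × ℝ × ℝ)
    (h1 : 0 ≤ x.1) (h1' : x.1 ≤ M) (h2 : 0 ≤ x.2.1) (h2' : x.2.1 ≤ M)
    (h3 : 0 ≤ x.2.2) (h3' : x.2.2 ≤ M) :
    fld lam d delta c k q M x = realF lam d delta c k q x := by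
  rw [fld, realF, cl_eq_self M x.1 h1 h1', cl_eq_self M x.2.1 h2 h2', cl_eq_self M x.2.2 h3 h3']

lemma fld_lip (lam d delta c k q M : ℝ) (hd : 0 ≤ d) (hdelta : 0 ≤ delta) (hc : 0 ≤ c)
    (hk : 0 ≤ k) (hq : 0 ≤ q) (hM : 0 ≤ M) :
    LipschitzWith (Real.toNNReal (d + delta + c + q + 2 * k * M))
      (fld lam d delta c k q M) := by
  apply LipschitzWith.of_dist_le_mul
  intro x y
  have hKr : ((Real.toNNReal (d + delta + c + q + 2 * k * M) : ℝ≥0) : ℝ)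
      = d + delta + c + q + 2 * k * M := Real.coe_toNNReal _ (by positivity)
  rw [hKr]
  have hD : (0:ℝ) ≤ dist x y := dist_nonneg
  have e1 : |x.1 - y.1| ≤ dist x y := by
    rw [← Real.dist_eq, Prod.dist_eq]; exact le_max_left _ _
  have e2 : |x.2.1 - y.2.1| ≤ dist x y := by
    rw [← Real.dist_eq, Prod.dist_eq, Prod.dist_eq]
    exact le_trans (le_max_left _ _) (le_max_right _ _)
  have e3 : |x.2.2 - y.2.2| ≤ dist x y := by
    rw [← Real.dist_eq, Prod.dist_eq, Prod.dist_eq]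
    exact le_trans (le_max_right _ _) (le_max_right _ _)
  have c1 : |cl M x.1 - cl M y.1| ≤ dist x y := le_trans (cl_lip _ _ _) e1
  have c2 : |cl M x.2.1 - cl M y.2.1| ≤ dist x y := le_trans (cl_lip _ _ _) e2
  have c3 : |cl M x.2.2 - cl M y.2.2| ≤ dist x y := le_trans (cl_lip _ _ _) e3
  obtain ⟨c1a, c1b⟩ := abs_le.1 c1
  obtain ⟨c2a, c2b⟩ := abs_le.1 c2
  obtain ⟨c3a, c3b⟩ := abs_le.1 c3
  have b1 := cl_nonneg M x.1; have b1' := cl_le M x.1 hM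
  have b3 := cl_nonneg M x.2.2; have b3' := cl_le M x.2.2 hM
  have b1y := cl_nonneg M y.1; have b1y' := cl_le M y.1 hM
  have b3y := cl_nonneg M y.2.2; have b3y' := cl_le M y.2.2 hM
  have hprod : |cl M x.2.2 * cl M x.1 - cl M y.2.2 * cl M y.1| ≤ 2 * M * dist x y := by
    have key : cl M x.2.2 * cl M x.1 - cl M y.2.2 * cl M y.1
        = cl M x.2.2 * (cl M x.1 - cl M y.1) + cl M y.1 * (cl M x.2.2 - cl M y.2.2) := by ring
    have h1 := mul_bound b3 b3' c1a c1b hD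
    have h2 := mul_bound b1y b1y' c3a c3b hD
    rw [key, abs_le]
    constructor <;> nlinarith [h1.1, h1.2, h2.1, h2.2]
  obtain ⟨pa, pb⟩ := abs_le.1 hprod
  have hkp1 := mul_le_mul_of_nonneg_left pb hk
  have hkp2 := mul_le_mul_of_nonneg_left pa hk
  have g1 : |(fld lam d delta c k q M x).1 - (fld lam d delta c k q M y).1|
      ≤ (d + delta + c + q + 2 * k * M) * dist x y := by
    simp only [fld]
    rw [show (lam - d * cl M x.1 - k * cl M x.2.2 * cl M x.1) -
        (lam - d * cl M y.1 - k * cl M y.2.2 * cl M y.1)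
        = -(d * (cl M x.1 - cl M y.1)) -
          k * (cl M x.2.2 * cl M x.1 - cl M y.2.2 * cl M y.1) by ring, abs_le]
    have hrest : 0 ≤ (delta + c + q) * dist x y := by positivity
    constructor <;> linarith [mul_le_mul_of_nonneg_left c1b hd, mul_le_mul_of_nonneg_left c1a hd]
  have g2 : |(fld lam d delta c k q M x).2.1 - (fld lam d delta c k q M y).2.1|
      ≤ (d + delta + c + q + 2 * k * M) * dist x y := by
    simp only [fld]
    rw [show (k * cl M x.2.2 * cl M x.1 - delta * cl M x.2.1) -
        (k * cl M y.2.2 * cl M y.1 - delta * cl M y.2.1)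
        = k * (cl M x.2.2 * cl M x.1 - cl M y.2.2 * cl M y.1) -
          delta * (cl M x.2.1 - cl M y.2.1) by ring, abs_le]
    have hrest : 0 ≤ (d + c + q) * dist x y := by positivity
    constructor <;> linarith [mul_le_mul_of_nonneg_left c2b hdelta,
      mul_le_mul_of_nonneg_left c2a hdelta]
  have g3 : |(fld lam d delta c k q M x).2.2 - (fld lam d delta c k q M y).2.2|
      ≤ (d + delta + c + q + 2 * k * M) * dist x y := by
    simp only [fld]
    rw [show (q * cl M x.2.1 - c * cl M x.2.2) - (q * cl M y.2.1 - c * cl M y.2.2)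
        = q * (cl M x.2.1 - cl M y.2.1) - c * (cl M x.2.2 - cl M y.2.2) by ring, abs_le]
    have hrest : 0 ≤ (d + delta) * dist x y + 2 * k * M * dist x y := by positivity
    constructor <;> linarith [mul_le_mul_of_nonneg_left c2b hq,
      mul_le_mul_of_nonneg_left c2a hq, mul_le_mul_of_nonneg_left c3b hc,
      mul_le_mul_of_nonneg_left c3a hc]
  calc dist (fld lam d delta c k q M x) (fld lam d delta c k q M y)
      = max (dist (fld lam d delta c k q M x).1 (fld lam d delta c k q M y).1)
          (max (dist (fld lam d delta c k q M x).2.1 (fld lam d delta c k q M y).2.1)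
               (dist (fld lam d delta c k q M x).2.2 (fld lam d delta c k q M y).2.2)) := by
        rw [Prod.dist_eq, Prod.dist_eq]
    _ ≤ (d + delta + c + q + 2 * k * M) * dist x y := by
        rw [Real.dist_eq, Real.dist_eq, Real.dist_eq]
        exact max_le g1 (max_le g2 g3)

lemma fld_bound (lam d delta c k q M : ℝ) (hlam : 0 ≤ lam) (hd : 0 ≤ d) (hdelta : 0 ≤ delta)
    (hc : 0 ≤ c) (hk : 0 ≤ k) (hq : 0 ≤ q) (hM : 0 ≤ M) (x : ℝ × ℝ × ℝ) :
    ‖fld lam d delta c k q M x‖ ≤ lam + d * M + k * M * M + delta * M + q * M + c * M := by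
  have b1 := cl_nonneg M x.1; have b1' := cl_le M x.1 hM
  have b2 := cl_nonneg M x.2.1; have b2' := cl_le M x.2.1 hM
  have b3 := cl_nonneg M x.2.2; have b3' := cl_le M x.2.2 hM
  rw [Prod.norm_def, Prod.norm_def]
  refine max_le ?_ (max_le ?_ ?_)
  · rw [Real.norm_eq_abs, fld]
    dsimp only
    rw [abs_le]
    constructor <;> nlinarith [mul_nonneg (mul_nonneg hk b3) b1,
      mul_le_mul (mul_le_mul_of_nonneg_left b3' hk) b1' b1 (by positivity)]
  · rw [Real.norm_eq_abs, fld]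
    dsimp only
    rw [abs_le]
    constructor <;> nlinarith [mul_nonneg (mul_nonneg hk b3) b1,
      mul_le_mul (mul_le_mul_of_nonneg_left b3' hk) b1' b1 (by positivity)]
  · rw [Real.norm_eq_abs, fld]
    dsimp only
    rw [abs_le]
    constructor <;> nlinarith [mul_nonneg hq b2, mul_nonneg hc b3,
      mul_le_mul_of_nonneg_left b2' hq, mul_le_mul_of_nonneg_left b3' hc,
      mul_nonneg hd hM, mul_nonneg (mul_nonneg hk hM) hM, mul_nonneg hdelta hM]


/-- existence of a solution of the truncated system on a given interval -/
lemma exists_trunc_sol (lam d delta c k q M : ℝ) (hlam : 0 ≤ lam) (hd : 0 ≤ d)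
    (hdelta : 0 ≤ delta) (hc : 0 ≤ c) (hk : 0 ≤ k) (hq : 0 ≤ q) (hM : 0 ≤ M)
    (t₀ : ℝ) (x₀ : ℝ × ℝ × ℝ) (a : ℝ) (ha : 0 < a) :
    ∃ X : ℝ → ℝ × ℝ × ℝ, X t₀ = x₀ ∧
      ∀ t ∈ Ioo (t₀ - a) (t₀ + a), HasDerivAt X (fld lam d delta c k q M (X t)) t := by
  set C : ℝ := lam + d * M + k * M * M + delta * M + q * M + c * M with hC
  have hC0 : 0 ≤ C := by positivity
  have ht₀ : t₀ ∈ Icc (t₀ - a) (t₀ + a) := ⟨by linarith, by linarith⟩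
  have hpl : IsPicardLindelof (fun _ x => fld lam d delta c k q M x) (tmin := t₀ - a)
      (tmax := t₀ + a) ⟨t₀, ht₀⟩ x₀ (Real.toNNReal (C * a)) 0 (Real.toNNReal C)
      (Real.toNNReal (d + delta + c + q + 2 * k * M)) := by
    apply IsPicardLindelof.of_time_independent
    · intro x _
      rw [Real.coe_toNNReal _ hC0]
      exact fld_bound lam d delta c k q M hlam hd hdelta hc hk hq hM x
    · exact (fld_lip lam d delta c k q M hd hdelta hc hk hq hM).lipschitzOnWith
    · rw [Real.coe_toNNReal _ hC0, Real.coe_toNNReal _ (mul_nonneg hC0 ha.le)]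
      simp only [NNReal.coe_zero, sub_zero, add_sub_cancel_left, sub_sub_cancel, max_self]
      exact le_rfl
  obtain ⟨f, hf0, hf⟩ := hpl.exists_eq_forall_mem_Icc_hasDerivWithinAt₀
  exact ⟨f, hf0, fun t ht => (hf t (Ioo_subset_Icc_self ht)).hasDerivAt
    (Icc_mem_nhds ht.1 ht.2)⟩

/-- a scalar function whose derivative is nonnegative whenever the function is nonpositive
stays nonnegative -/
lemma nonneg_of_deriv (f f' : ℝ → ℝ) {a b : ℝ} (hab : a ≤ b)
    (hf : ∀ t ∈ Icc a b, HasDerivAt f (f' t) t)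
    (h0 : 0 ≤ f a)
    (hside : ∀ t ∈ Icc a b, f t ≤ 0 → 0 ≤ f' t) :
    ∀ t ∈ Icc a b, 0 ≤ f t := by
  have key : ∀ ε : ℝ, 0 < ε → ∀ t ∈ Icc a b, -f t ≤ ε * Real.exp (t - a) := by
    intro ε hε
    have hB : ∀ x : ℝ, HasDerivAt (fun t => ε * Real.exp (t - a)) (ε * Real.exp (x - a)) x := by
      intro x
      have h1 : HasDerivAt (fun t : ℝ => t - a) 1 x := (hasDerivAt_id x).sub_const a
      have h2 := (h1.exp).const_mul ε
      simpa using h2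
    intro t ht
    refine image_le_of_deriv_right_lt_deriv_boundary (f := fun t => -f t)
      (f' := fun t => -f' t) (B := fun t => ε * Real.exp (t - a))
      (B' := fun t => ε * Real.exp (t - a)) ?_ ?_ ?_ hB ?_ ht
    · exact fun x hx => ((hf x hx).neg).continuousAt.continuousWithinAt
    · exact fun x hx => ((hf x (Ico_subset_Icc_self hx)).neg).hasDerivWithinAt
    · simp only [sub_self, Real.exp_zero, mul_one]
      linarith
    · intro x hx hcontact
      have hex : 0 < Real.exp (x - a) := Real.exp_pos _
      have heps : 0 < ε * Real.exp (x - a) := mul_pos hε hex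
      have hfx : f x ≤ 0 := by linarith
      have := hside x (Ico_subset_Icc_self hx) hfx
      linarith
  intro t ht
  by_contra hneg
  push_neg at hneg
  have hex : 0 < Real.exp (t - a) := Real.exp_pos _
  have hε : 0 < -f t / (2 * Real.exp (t - a)) := div_pos (by linarith) (by positivity)
  have hk2 := key _ hε t ht
  rw [div_mul_eq_mul_div, mul_comm] at hk2
  have h2 : Real.exp (t - a) * -f t / (2 * Real.exp (t - a)) = -f t / 2 := by
    field_simp
  rw [h2] at hk2
  linarith

/-- a scalar function with derivative bounded above grows at most linearly -/
lemma le_of_deriv_le_const (f f' : ℝ → ℝ) {a b C : ℝ} (hab : a ≤ b)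
    (hf : ∀ t ∈ Icc a b, HasDerivAt f (f' t) t)
    (hb : ∀ t ∈ Icc a b, f' t ≤ C) :
    ∀ t ∈ Icc a b, f t ≤ f a + C * (t - a) := by
  have hD : ∀ x ∈ Icc a b, HasDerivAt (fun t => C * t - f t) (C - f' x) x := by
    intro x hx
    have h1 : HasDerivAt (fun t : ℝ => C * t) C x := by
      simpa using (hasDerivAt_id x).const_mul C
    exact h1.sub (hf x hx)
  have H : MonotoneOn (fun t => C * t - f t) (Icc a b) := by
    apply monotoneOn_of_deriv_nonneg (convex_Icc a b)
    · exact fun x hx => (hD x hx).continuousAt.continuousWithinAt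
    · intro x hx
      rw [interior_Icc] at hx
      exact ((hD x (Ioo_subset_Icc_self hx)).differentiableAt).differentiableWithinAt
    · intro x hx
      rw [interior_Icc] at hx
      rw [(hD x (Ioo_subset_Icc_self hx)).deriv]
      linarith [hb x (Ioo_subset_Icc_self hx)]
  intro t ht
  have := H (left_mem_Icc.mpr hab) ht ht.1
  dsimp at this
  linarith


/-- solutions of the truncated system with positive initial data stay in the box `[0,M]³`
as long as `M` dominates the a priori bounds -/
lemma invariance (lam d delta c k q M : ℝ) (hlam : 0 ≤ lam) (hd : 0 ≤ d) (hdelta : 0 ≤ delta)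
    (hc : 0 ≤ c) (hk : 0 ≤ k) (hq : 0 ≤ q) {a t₀ T₀ I₀ V₀ : ℝ}
    (ha : 0 < a) (hT₀ : 0 < T₀) (hI₀ : 0 < I₀) (hV₀ : 0 < V₀)
    (hM1 : T₀ + I₀ + lam * a ≤ M)
    (hM2 : V₀ + q * (T₀ + I₀ + lam * a) * a ≤ M)
    (X : ℝ → ℝ × ℝ × ℝ) (hX0 : X t₀ = (T₀, I₀, V₀))
    (hX : ∀ t ∈ Icc t₀ (t₀ + a), HasDerivAt X (fld lam d delta c k q M (X t)) t) :
    ∀ t ∈ Icc t₀ (t₀ + a),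
      (0 ≤ (X t).1 ∧ (X t).1 ≤ M) ∧ (0 ≤ (X t).2.1 ∧ (X t).2.1 ≤ M) ∧
      (0 ≤ (X t).2.2 ∧ (X t).2.2 ≤ M) := by
  have hM0 : 0 ≤ M := by nlinarith
  have hab : t₀ ≤ t₀ + a := by linarith
  have hT : ∀ t ∈ Icc t₀ (t₀ + a),
      HasDerivAt (fun s => (X s).1) ((fld lam d delta c k q M (X t)).1) t :=
    fun t ht => (hasFDerivAt_fst (𝕜 := ℝ) (p := X t)).comp_hasDerivAt t (hX t ht)
  have hI : ∀ t ∈ Icc t₀ (t₀ + a),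
      HasDerivAt (fun s => (X s).2.1) ((fld lam d delta c k q M (X t)).2.1) t :=
    fun t ht => by
      have h0 := (hasFDerivAt_snd (𝕜 := ℝ) (p := X t)).comp_hasDerivAt t (hX t ht)
      have := (hasFDerivAt_fst (𝕜 := ℝ) (p := (X t).2)).comp_hasDerivAt t h0
      exact this
  have hV : ∀ t ∈ Icc t₀ (t₀ + a),
      HasDerivAt (fun s => (X s).2.2) ((fld lam d delta c k q M (X t)).2.2) t :=
    fun t ht => by
      have h0 := (hasFDerivAt_snd (𝕜 := ℝ) (p := X t)).comp_hasDerivAt t (hX t ht)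
      have := (hasFDerivAt_snd (𝕜 := ℝ) (p := (X t).2)).comp_hasDerivAt t h0
      exact this
  -- nonnegativity
  have hTn : ∀ t ∈ Icc t₀ (t₀ + a), 0 ≤ (X t).1 := by
    apply nonneg_of_deriv _ _ hab hT
    · rw [hX0]; exact hT₀.le
    · intro t ht hle
      simp only [fld, cl_eq_zero M _ hle hM0]
      simp [hlam]
  have hIn : ∀ t ∈ Icc t₀ (t₀ + a), 0 ≤ (X t).2.1 := by
    apply nonneg_of_deriv _ _ hab hI
    · rw [hX0]; exact hI₀.le
    · intro t ht hle
      simp only [fld, cl_eq_zero M _ hle hM0]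
      have := mul_nonneg (mul_nonneg hk (cl_nonneg M (X t).2.2)) (cl_nonneg M (X t).1)
      simp only [mul_zero, sub_zero]
      linarith
  have hVn : ∀ t ∈ Icc t₀ (t₀ + a), 0 ≤ (X t).2.2 := by
    apply nonneg_of_deriv _ _ hab hV
    · rw [hX0]; exact hV₀.le
    · intro t ht hle
      simp only [fld, cl_eq_zero M _ hle hM0]
      have := mul_nonneg hq (cl_nonneg M (X t).2.1)
      simp only [mul_zero, sub_zero]
      linarith
  -- upper bound for T + I
  have hTI : ∀ t ∈ Icc t₀ (t₀ + a), (X t).1 + (X t).2.1 ≤ T₀ + I₀ + lam * a := by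
    have H := le_of_deriv_le_const (fun s => (X s).1 + (X s).2.1)
      (fun s => (fld lam d delta c k q M (X s)).1 + (fld lam d delta c k q M (X s)).2.1)
      (C := lam) hab
      (fun t ht => (hT t ht).add (hI t ht))
      (by
        intro t ht
        simp only [fld]
        have h1 := mul_nonneg hd (cl_nonneg M (X t).1)
        have h2 := mul_nonneg hdelta (cl_nonneg M (X t).2.1)
        linarith)
    intro t ht
    have h5 := H t ht
    rw [hX0] at h5
    dsimp only at h5
    have hta : t - t₀ ≤ a := by linarith [ht.2]
    have h6 := mul_le_mul_of_nonneg_left hta hlam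
    linarith
  have hTub : ∀ t ∈ Icc t₀ (t₀ + a), (X t).1 ≤ M := by
    intro t ht
    have := hTI t ht; have := hIn t ht
    linarith
  have hIub : ∀ t ∈ Icc t₀ (t₀ + a), (X t).2.1 ≤ M := by
    intro t ht
    have := hTI t ht; have := hTn t ht
    linarith
  -- upper bound for V
  have hVub : ∀ t ∈ Icc t₀ (t₀ + a), (X t).2.2 ≤ M := by
    have hB1 : (0:ℝ) ≤ T₀ + I₀ + lam * a := by nlinarith
    have H := le_of_deriv_le_const (fun s => (X s).2.2)
      (fun s => (fld lam d delta c k q M (X s)).2.2)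
      (C := q * (T₀ + I₀ + lam * a)) hab hV
      (by
        intro t ht
        simp only [fld]
        have h1 : cl M (X t).2.1 ≤ (X t).2.1 := cl_le_self M _ (hIn t ht)
        have h2 : (X t).2.1 ≤ T₀ + I₀ + lam * a := by
          have := hTI t ht; have := hTn t ht; linarith
        have h3 := mul_nonneg hc (cl_nonneg M (X t).2.2)
        have h4 := mul_le_mul_of_nonneg_left (le_trans h1 h2) hq
        linarith)
    intro t ht
    have h5 := H t ht
    rw [hX0] at h5
    dsimp only at h5
    have hta : t - t₀ ≤ a := by linarith [ht.2]
    have hqB1 : 0 ≤ q * (T₀ + I₀ + lam * a) := by nlinarith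
    have h6 := mul_le_mul_of_nonneg_left hta hqB1
    linarith
  exact fun t ht => ⟨⟨hTn t ht, hTub t ht⟩, ⟨hIn t ht, hIub t ht⟩, ⟨hVn t ht, hVub t ht⟩⟩


/-- truncation levels -/
noncomputable def Mfun (lam q T₀ I₀ V₀ : ℝ) (n : ℕ) : ℝ :=
  (T₀ + I₀ + lam * ((n : ℝ) + 1)) + (V₀ + q * (T₀ + I₀ + lam * ((n : ℝ) + 1)) * ((n : ℝ) + 1))

lemma Mfun_mono (lam q T₀ I₀ V₀ : ℝ) (hlam : 0 ≤ lam) (hq : 0 ≤ q)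
    (hT₀ : 0 < T₀) (hI₀ : 0 < I₀) (hV₀ : 0 < V₀) {n m : ℕ} (hnm : n ≤ m) :
    Mfun lam q T₀ I₀ V₀ n ≤ Mfun lam q T₀ I₀ V₀ m := by
  have h : (n : ℝ) ≤ (m : ℝ) := Nat.cast_le.mpr hnm
  have h0 : (0:ℝ) ≤ (n : ℝ) := Nat.cast_nonneg n
  rw [Mfun, Mfun]
  have hL : lam * ((n:ℝ) + 1) ≤ lam * ((m:ℝ) + 1) := mul_le_mul_of_nonneg_left (by linarith) hlam
  have hApos : (0:ℝ) ≤ T₀ + I₀ + lam * ((n:ℝ) + 1) := by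
    nlinarith [mul_nonneg hlam (by linarith : (0:ℝ) ≤ (n:ℝ) + 1)]
  have hBpos : (0:ℝ) ≤ T₀ + I₀ + lam * ((m:ℝ) + 1) := by linarith
  have hq1 : q * (T₀ + I₀ + lam * ((n:ℝ) + 1)) ≤ q * (T₀ + I₀ + lam * ((m:ℝ) + 1)) :=
    mul_le_mul_of_nonneg_left (by linarith) hq
  have hq2 : q * (T₀ + I₀ + lam * ((n:ℝ) + 1)) * ((n:ℝ) + 1)
      ≤ q * (T₀ + I₀ + lam * ((m:ℝ) + 1)) * ((m:ℝ) + 1) :=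
    mul_le_mul hq1 (by linarith) (by linarith) (mul_nonneg hq hBpos)
  linarith

/-- the stage property: a solution of the real system on `[t₀, t₀+n+1]` staying
in the box `[0, Mfun n]³` -/
def StageP (lam d delta c k q t₀ T₀ I₀ V₀ : ℝ) (n : ℕ) (X : ℝ → ℝ × ℝ × ℝ) : Prop :=
  X t₀ = (T₀, I₀, V₀) ∧
    ∀ t ∈ Icc t₀ (t₀ + ((n : ℝ) + 1)),
      HasDerivAt X (realF lam d delta c k q (X t)) t ∧
      (0 ≤ (X t).1 ∧ (X t).1 ≤ Mfun lam q T₀ I₀ V₀ n) ∧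
      (0 ≤ (X t).2.1 ∧ (X t).2.1 ≤ Mfun lam q T₀ I₀ V₀ n) ∧
      (0 ≤ (X t).2.2 ∧ (X t).2.2 ≤ Mfun lam q T₀ I₀ V₀ n)

lemma stage (lam d delta c k q : ℝ) (hlam : 0 ≤ lam) (hd : 0 ≤ d) (hdelta : 0 ≤ delta)
    (hc : 0 ≤ c) (hk : 0 ≤ k) (hq : 0 ≤ q) (t₀ T₀ I₀ V₀ : ℝ)
    (hT₀ : 0 < T₀) (hI₀ : 0 < I₀) (hV₀ : 0 < V₀) (n : ℕ) :
    ∃ X : ℝ → ℝ × ℝ × ℝ, StageP lam d delta c k q t₀ T₀ I₀ V₀ n X := by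
  set M := Mfun lam q T₀ I₀ V₀ n with hMdef
  have hn0 : (0:ℝ) ≤ (n : ℝ) := Nat.cast_nonneg n
  have hB1 : (0:ℝ) < T₀ + I₀ + lam * ((n : ℝ) + 1) := by nlinarith
  have hM1 : T₀ + I₀ + lam * ((n : ℝ) + 1) ≤ M := by
    rw [hMdef, Mfun]
    nlinarith [mul_nonneg (mul_nonneg hq hB1.le) (by linarith : (0:ℝ) ≤ (n:ℝ)+1)]
  have hM2 : V₀ + q * (T₀ + I₀ + lam * ((n : ℝ) + 1)) * ((n : ℝ) + 1) ≤ M := by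
    rw [hMdef, Mfun]
    linarith
  have hM0 : 0 ≤ M := by nlinarith
  obtain ⟨X, hX0, hX⟩ := exists_trunc_sol lam d delta c k q M hlam hd hdelta hc hk hq hM0
    t₀ (T₀, I₀, V₀) ((n : ℝ) + 2) (by linarith)
  have hX' : ∀ t ∈ Icc t₀ (t₀ + ((n : ℝ) + 1)),
      HasDerivAt X (fld lam d delta c k q M (X t)) t := by
    intro t ht
    exact hX t ⟨by linarith [ht.1], by linarith [ht.2]⟩
  have hinv := invariance lam d delta c k q M hlam hd hdelta hc hk hq
    (a := (n : ℝ) + 1) (by linarith) hT₀ hI₀ hV₀ hM1 hM2 X hX0 hX'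
  refine ⟨X, hX0, fun t ht => ?_⟩
  obtain ⟨⟨h1, h1'⟩, ⟨h2, h2'⟩, ⟨h3, h3'⟩⟩ := hinv t ht
  refine ⟨?_, ⟨h1, h1'⟩, ⟨h2, h2'⟩, ⟨h3, h3'⟩⟩
  rw [← fld_eq_realF lam d delta c k q M (X t) h1 h1' h2 h2' h3 h3']
  exact hX' t ht

lemma agree (lam d delta c k q : ℝ) (hlam : 0 ≤ lam) (hd : 0 ≤ d) (hdelta : 0 ≤ delta)
    (hc : 0 ≤ c) (hk : 0 ≤ k) (hq : 0 ≤ q) (t₀ T₀ I₀ V₀ : ℝ)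
    (hT₀ : 0 < T₀) (hI₀ : 0 < I₀) (hV₀ : 0 < V₀) {n m : ℕ} (hnm : n ≤ m)
    {X Y : ℝ → ℝ × ℝ × ℝ}
    (hX : StageP lam d delta c k q t₀ T₀ I₀ V₀ n X)
    (hY : StageP lam d delta c k q t₀ T₀ I₀ V₀ m Y) :
    ∀ s ∈ Icc t₀ (t₀ + ((n : ℝ) + 1)), X s = Y s := by
  have hMm0 : 0 ≤ Mfun lam q T₀ I₀ V₀ m := by
    rw [Mfun]
    have h0 : (0:ℝ) ≤ (m : ℝ) := Nat.cast_nonneg m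
    nlinarith [mul_nonneg hlam (by linarith : (0:ℝ) ≤ (m:ℝ)+1),
      mul_nonneg (mul_nonneg hq (by nlinarith [mul_nonneg hlam (by linarith : (0:ℝ) ≤ (m:ℝ)+1)] :
        (0:ℝ) ≤ T₀ + I₀ + lam * ((m:ℝ)+1))) (by linarith : (0:ℝ) ≤ (m:ℝ)+1)]
  have hMle := Mfun_mono lam q T₀ I₀ V₀ hlam hq hT₀ hI₀ hV₀ hnm
  have hsub : Icc t₀ (t₀ + ((n : ℝ) + 1)) ⊆ Icc t₀ (t₀ + ((m : ℝ) + 1)) := by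
    apply Icc_subset_Icc le_rfl
    have : (n : ℝ) ≤ (m : ℝ) := Nat.cast_le.mpr hnm
    linarith
  have derivX : ∀ t ∈ Ico t₀ (t₀ + ((n : ℝ) + 1)),
      HasDerivWithinAt X (fld lam d delta c k q (Mfun lam q T₀ I₀ V₀ m) (X t)) (Ici t) t := by
    intro t ht
    obtain ⟨hder, ⟨h1, h1'⟩, ⟨h2, h2'⟩, ⟨h3, h3'⟩⟩ := hX.2 t (Ico_subset_Icc_self ht)
    rw [fld_eq_realF lam d delta c k q _ (X t) h1 (le_trans h1' hMle) h2 (le_trans h2' hMle)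
      h3 (le_trans h3' hMle)]
    exact hder.hasDerivWithinAt
  have derivY : ∀ t ∈ Ico t₀ (t₀ + ((n : ℝ) + 1)),
      HasDerivWithinAt Y (fld lam d delta c k q (Mfun lam q T₀ I₀ V₀ m) (Y t)) (Ici t) t := by
    intro t ht
    obtain ⟨hder, ⟨h1, h1'⟩, ⟨h2, h2'⟩, ⟨h3, h3'⟩⟩ := hY.2 t (hsub (Ico_subset_Icc_self ht))
    rw [fld_eq_realF lam d delta c k q _ (Y t) h1 h1' h2 h2' h3 h3']
    exact hder.hasDerivWithinAt
  exact ODE_solution_unique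
    (fun t => fld_lip lam d delta c k q _ hd hdelta hc hk hq hMm0)
    (fun t ht => ((hX.2 t ht).1).continuousAt.continuousWithinAt)
    derivX
    (fun t ht => ((hY.2 t (hsub ht)).1).continuousAt.continuousWithinAt)
    derivY
    (hX.1.trans hY.1.symm)

end HCVAux


/-- Global forward existence: for positive initial data there is a solution of the
HCV model defined on all of `[t₀, ∞)`. -/
theorem hcv_global_existence
    (lam d beta delta p c eta eps : ℝ)
    (hlam : 0 ≤ lam) (hd : 0 ≤ d) (hbeta : 0 ≤ beta) (hdelta : 0 ≤ delta)
    (hp : 0 ≤ p) (hc : 0 ≤ c) (heta : eta ∈ Set.Icc (0:ℝ) 1) (heps : eps ∈ Set.Icc (0:ℝ) 1)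
    (t₀ T₀ I₀ V₀ : ℝ) (hT₀ : 0 < T₀) (hI₀ : 0 < I₀) (hV₀ : 0 < V₀) :
    ∃ T I V : ℝ → ℝ,
      T t₀ = T₀ ∧ I t₀ = I₀ ∧ V t₀ = V₀ ∧
      ∀ t ∈ Set.Ici t₀,
        HasDerivAt T (lam - d * T t - (1 - eta) * beta * V t * T t) t ∧
        HasDerivAt I ((1 - eta) * beta * V t * T t - delta * I t) t ∧
        HasDerivAt V ((1 - eps) * p * I t - c * V t) t := by
  set k := (1 - eta) * beta with hkdef
  set q := (1 - eps) * p with hqdef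
  have hk : 0 ≤ k := mul_nonneg (by linarith [heta.2]) hbeta
  have hq : 0 ≤ q := mul_nonneg (by linarith [heps.2]) hp
  have hstage := fun n => HCVAux.stage lam d delta c k q hlam hd hdelta hc hk hq
    t₀ T₀ I₀ V₀ hT₀ hI₀ hV₀ n
  choose 𝒳 h𝒳 using hstage
  have hagree : ∀ (n m : ℕ) (s : ℝ), t₀ ≤ s → s ≤ t₀ + ((n : ℝ) + 1) →
      s ≤ t₀ + ((m : ℝ) + 1) → 𝒳 n s = 𝒳 m s := by
    intro n m s h1 h2 h3
    have e1 := HCVAux.agree lam d delta c k q hlam hd hdelta hc hk hq t₀ T₀ I₀ V₀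
      hT₀ hI₀ hV₀ (le_max_left n m) (h𝒳 n) (h𝒳 (max n m)) s ⟨h1, h2⟩
    have e2 := HCVAux.agree lam d delta c k q hlam hd hdelta hc hk hq t₀ T₀ I₀ V₀
      hT₀ hI₀ hV₀ (le_max_right n m) (h𝒳 m) (h𝒳 (max n m)) s ⟨h1, h3⟩
    rw [e1, e2]
  set N : ℝ → ℕ := fun s => ⌈s - t₀⌉₊ with hNdef
  have hNmem : ∀ s : ℝ, t₀ ≤ s → s ≤ t₀ + ((N s : ℝ) + 1) := by
    intro s hs
    have := Nat.le_ceil (s - t₀)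
    rw [hNdef]
    dsimp only
    linarith
  set glob : ℝ → ℝ × ℝ × ℝ := fun s => 𝒳 (N s) s with hglobdef
  have hNt₀ : N t₀ = 0 := by rw [hNdef]; simp
  have hglob0 : glob t₀ = (T₀, I₀, V₀) := by
    rw [hglobdef]
    dsimp only
    rw [hNt₀]
    exact (h𝒳 0).1
  have hderiv : ∀ t, t₀ ≤ t → HasDerivAt glob (HCVAux.realF lam d delta c k q (glob t)) t := by
    intro t ht
    have hmemt : t ∈ Set.Icc t₀ (t₀ + ((N t : ℝ) + 1)) := ⟨ht, hNmem t ht⟩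
    have heq : glob =ᶠ[nhds t] 𝒳 (N t) := by
      rcases eq_or_lt_of_le ht with heq0 | hlt
      · -- t = t₀
        subst heq0
        refine Filter.eventuallyEq_of_mem
          (Ioo_mem_nhds (by linarith : t₀ - 1 < t₀) (by linarith : t₀ < t₀ + 1)) ?_
        intro s hs
        show 𝒳 (N s) s = 𝒳 (N t₀) s
        rcases le_or_gt s t₀ with hsle | hslt
        · have hNs : N s = 0 := by
            rw [hNdef]; exact Nat.ceil_eq_zero.mpr (by linarith)
          rw [hNs, hNt₀]
        · refine hagree (N s) (N t₀) s hslt.le (hNmem s hslt.le) ?_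
          rw [hNt₀]
          push_cast
          linarith [hs.2]
      · have htub : t < t₀ + ((N t : ℝ) + 1) := by
          have := Nat.le_ceil (t - t₀)
          rw [hNdef]
          dsimp only
          linarith
        refine Filter.eventuallyEq_of_mem (Ioo_mem_nhds hlt htub) ?_
        intro s hs
        exact hagree (N s) (N t) s hs.1.le (hNmem s hs.1.le) hs.2.le
    have hXd := ((h𝒳 (N t)).2 t hmemt).1
    exact (Filter.EventuallyEq.hasDerivAt_iff heq).mpr hXd
  refine ⟨fun s => (glob s).1, fun s => (glob s).2.1, fun s => (glob s).2.2, ?_, ?_, ?_, ?_⟩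
  · show (glob t₀).1 = T₀
    rw [hglob0]
  · show (glob t₀).2.1 = I₀
    rw [hglob0]
  · show (glob t₀).2.2 = V₀
    rw [hglob0]
  · intro t ht
    have hD := hderiv t ht
    have h1 : HasDerivAt (fun s => (glob s).1)
        ((HCVAux.realF lam d delta c k q (glob t)).1) t :=
      (hasFDerivAt_fst (𝕜 := ℝ) (p := glob t)).comp_hasDerivAt t hD
    have h2 : HasDerivAt (fun s => (glob s).2.1)
        ((HCVAux.realF lam d delta c k q (glob t)).2.1) t :=
      by
        have h0 := (hasFDerivAt_snd (𝕜 := ℝ) (p := glob t)).comp_hasDerivAt t hD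
        have := (hasFDerivAt_fst (𝕜 := ℝ) (p := (glob t).2)).comp_hasDerivAt t h0
        exact this
    have h3 : HasDerivAt (fun s => (glob s).2.2)
        ((HCVAux.realF lam d delta c k q (glob t)).2.2) t :=
      by
        have h0 := (hasFDerivAt_snd (𝕜 := ℝ) (p := glob t)).comp_hasDerivAt t hD
        have := (hasFDerivAt_snd (𝕜 := ℝ) (p := (glob t).2)).comp_hasDerivAt t h0
        exact this
    refine ⟨?_, ?_, ?_⟩
    · convert h1 using 1 <;> rfl
    · convert h2 using 1 <;> rfl
    · convert h3 using 1 <;> rfl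
end

section
/- For any positive solution (T, I, V) of the HCV model with d > 0 and δ > 0, one has T(t) + I(t) ≤ C₁ and V(t) ≤ C₂ for all t ≥ t₀, where C₁ = max{T₀ + I₀, λ/min(d,δ)} and C₂ = max{V₀, (1-ε)·p·C₁/c}. -/
open Set Real

/-- If `f' t ≤ A - m * f t` on `[t₀, ∞)` with `m > 0`, `A ≥ 0`, then
`f t ≤ max (f t₀) (A / m)` for all `t ≥ t₀`. -/
lemma ode_bound_aux (m A t₀ : ℝ) (hm : 0 < m) (hA : 0 ≤ A) (f f' : ℝ → ℝ)
    (hf : ∀ t ∈ Set.Ici t₀, HasDerivAt f (f' t) t)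
    (hb : ∀ t ∈ Set.Ici t₀, f' t ≤ A - m * f t) :
    ∀ t ∈ Set.Ici t₀, f t ≤ max (f t₀) (A / m) := by
  intro t ht
  set δ := max (f t₀) (A / m) with hδ
  have key : ∀ x ∈ Icc t₀ t, f x ≤ gronwallBound δ (-m) A (x - t₀) := by
    apply le_gronwallBound_of_liminf_deriv_right_le
    · exact fun x hx => ((hf x hx.1).continuousAt).continuousWithinAt
    · intro x hx r hr
      exact ((hf x hx.1).hasDerivWithinAt).liminf_right_slope_le hr
    · exact le_max_left _ _
    · intro x hx
      have := hb x hx.1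
      linarith
  have h1 := key t ⟨ht, le_refl _⟩
  have hKne : (-m) ≠ 0 := by linarith
  rw [gronwallBound_of_K_ne_0 hKne] at h1
  set e := Real.exp (-m * (t - t₀)) with he
  have he0 : 0 < e := Real.exp_pos _
  have he1 : e ≤ 1 := by
    rw [he]
    apply Real.exp_le_one_iff.mpr
    have : 0 ≤ t - t₀ := by simpa using ht
    nlinarith
  have hAm : A / m ≤ δ := le_max_right _ _
  have hAm0 : 0 ≤ A / m := div_nonneg hA hm.le
  have : δ * e + A / (-m) * (e - 1) ≤ δ := by
    have hAneg : A / (-m) = -(A / m) := by field_simp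
    rw [hAneg]
    nlinarith
  linarith

/-- Global boundedness of positive solutions of the HCV model. -/
theorem hcv_global_boundedness
    (lam d beta delta p c eta eps : ℝ)
    (hlam : 0 ≤ lam) (hd : 0 < d) (hbeta : 0 ≤ beta) (hdelta : 0 < delta)
    (hp : 0 ≤ p) (hc : 0 < c) (heta : eta ∈ Set.Icc (0:ℝ) 1) (heps : eps ∈ Set.Icc (0:ℝ) 1)
    (t₀ : ℝ) (T I V : ℝ → ℝ)
    (hT : ∀ t ∈ Set.Ici t₀,
      HasDerivAt T (lam - d * T t - (1 - eta) * beta * V t * T t) t)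
    (hI : ∀ t ∈ Set.Ici t₀,
      HasDerivAt I ((1 - eta) * beta * V t * T t - delta * I t) t)
    (hV : ∀ t ∈ Set.Ici t₀,
      HasDerivAt V ((1 - eps) * p * I t - c * V t) t)
    (hpos : ∀ t ∈ Set.Ici t₀, 0 < T t ∧ 0 < I t ∧ 0 < V t) :
    ∀ t ∈ Set.Ici t₀,
      T t + I t ≤ max (T t₀ + I t₀) (lam / min d delta) ∧
      V t ≤ max (V t₀) ((1 - eps) * p * max (T t₀ + I t₀) (lam / min d delta) / c) := by
  set m := min d delta with hm
  have hm0 : 0 < m := lt_min hd hdelta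
  -- Bound on N = T + I
  have hN : ∀ t ∈ Set.Ici t₀, T t + I t ≤ max (T t₀ + I t₀) (lam / m) := by
    apply ode_bound_aux m lam t₀ hm0 hlam (fun t => T t + I t)
      (fun t => lam - d * T t - delta * I t)
    · intro t ht
      have := (hT t ht).add (hI t ht)
      exact this.congr_deriv (by ring)
    · intro t ht
      obtain ⟨hTp, hIp, _⟩ := hpos t ht
      have h1 : m ≤ d := min_le_left _ _
      have h2 : m ≤ delta := min_le_right _ _
      nlinarith
  intro t ht
  refine ⟨hN t ht, ?_⟩
  -- Bound on V
  set C₁ := max (T t₀ + I t₀) (lam / m) with hC₁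
  have hC₁0 : 0 ≤ C₁ := by
    obtain ⟨hTp, hIp, _⟩ := hpos t₀ (le_refl t₀)
    have : 0 ≤ T t₀ + I t₀ := by linarith
    exact this.trans (le_max_left _ _)
  have heps1 : 0 ≤ 1 - eps := by linarith [heps.2]
  have hA : 0 ≤ (1 - eps) * p * C₁ := by positivity
  exact ode_bound_aux c ((1 - eps) * p * C₁) t₀ hc hA V
    (fun t => (1 - eps) * p * I t - c * V t) hV
    (fun s hs => by
      obtain ⟨hTp, hIp, _⟩ := hpos s hs
      have hIle : I s ≤ C₁ := by
        have := hN s hs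
        linarith
      show (1 - eps) * p * I s - c * V s ≤ (1 - eps) * p * C₁ - c * V s
      nlinarith [mul_le_mul_of_nonneg_left hIle (mul_nonneg heps1 hp)]) t ht
end

section
/- The set Ω = {(T, I, V) ∈ ℝ³₊ : T + I ≤ λ/min(d,δ) and V ≤ (1-ε)·p·λ/(c·min(d,δ))} is positively invariant for the HCV model: any solution starting in Ω at time t₀ remains in Ω for all later times in its interval of existence. -/
open Set Filter Topology

lemma max_fence {ι : Type*} [Fintype ι] [Nonempty ι]
    (g g' : ι → ℝ → ℝ) {a b : ℝ} (B B' : ℝ → ℝ)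
    (hg : ∀ i, ∀ x ∈ Set.Icc a b, HasDerivAt (g i) (g' i x) x)
    (ha : ∀ i, g i a ≤ B a)
    (hB : ∀ x, HasDerivAt B (B' x) x)
    (bound : ∀ x ∈ Set.Ico a b, ∀ i, g i x = B x → (∀ j, g j x ≤ B x) → g' i x < B' x) :
    ∀ x ∈ Set.Icc a b, ∀ i, g i x ≤ B x := by
  set f : ℝ → ℝ := fun x => Finset.univ.sup' Finset.univ_nonempty (fun i => g i x) with hf_def
  have hle : ∀ i x, g i x ≤ f x := fun i x =>
    Finset.le_sup' (fun i => g i x) (Finset.mem_univ i)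
  have hact : ∀ x : ℝ, (Finset.univ.filter (fun i => f x ≤ g i x)).Nonempty := by
    intro x
    obtain ⟨i, -, hi⟩ := Finset.exists_mem_eq_sup' (Finset.univ_nonempty (α := ι))
      (fun i => g i x)
    exact ⟨i, Finset.mem_filter.2 ⟨Finset.mem_univ i, hi.le⟩⟩
  set F' : ℝ → ℝ := fun x =>
    (Finset.univ.filter (fun i => f x ≤ g i x)).sup' (hact x) (fun i => g' i x) with hF'_def
  have main : ∀ x ∈ Set.Icc a b, f x ≤ B x := by
    intro x hx
    refine image_le_of_liminf_slope_right_lt_deriv_boundary (f' := F') ?_ ?_ ?_ hB ?_ hx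
    · intro y hy
      exact (ContinuousAt.finset_sup'_apply Finset.univ_nonempty
        (fun i _ => (hg i y hy).continuousAt)).continuousWithinAt
    · intro y hy r hr
      have hy' : y ∈ Set.Icc a b := Set.Ico_subset_Icc_self hy
      have hev : ∀ i, ∀ᶠ z in 𝓝[>] y, g i z - f y < r * (z - y) := by
        intro i
        by_cases hi : f y ≤ g i y
        · have hgi : g i y = f y := le_antisymm (hle i y) hi
          have hlt : g' i y < r :=
            lt_of_le_of_lt (Finset.le_sup' (fun i => g' i y)
              (Finset.mem_filter.2 ⟨Finset.mem_univ i, hi⟩)) hr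
          have hslope := hasDerivAt_iff_tendsto_slope.1 (hg i y hy')
          have h1 : ∀ᶠ z in 𝓝[≠] y, slope (g i) y z < r := hslope.eventually_lt_const hlt
          have h2 : ∀ᶠ z in 𝓝[>] y, slope (g i) y z < r :=
            nhdsWithin_mono y (fun z hz => ne_of_gt hz) h1
          filter_upwards [h2, self_mem_nhdsWithin] with z hz hz'
          have hzy : (0:ℝ) < z - y := sub_pos.2 hz'
          rw [slope_def_field] at hz
          have := (div_lt_iff₀ hzy).1 hz
          linarith
        · push_neg at hi
          have hc : Tendsto (g i) (𝓝 y) (𝓝 (g i y)) := (hg i y hy').continuousAt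
          have h1 : ∀ᶠ z in 𝓝 y, g i z < (g i y + f y) / 2 :=
            hc.eventually_lt_const (by linarith)
          have hc2 : Tendsto (fun z => r * (z - y)) (𝓝 y) (𝓝 0) := by
            have : Tendsto (fun z => r * (z - y)) (𝓝 y) (𝓝 (r * (y - y))) :=
              (continuous_const.mul (continuous_id.sub continuous_const)).tendsto y
            simpa using this
          have h2 : ∀ᶠ z in 𝓝 y, (g i y - f y) / 2 < r * (z - y) :=
            hc2.eventually_const_lt (by linarith)
          filter_upwards [nhdsWithin_le_nhds h1, nhdsWithin_le_nhds h2] with z hz1 hz2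
          linarith
      have hall : ∀ᶠ z in 𝓝[>] y, (∀ i, g i z - f y < r * (z - y)) ∧ y < z :=
        (eventually_all.2 hev).and self_mem_nhdsWithin
      refine (hall.mono ?_).frequently
      rintro z ⟨hz1, hz2⟩
      have hfz : f z < f y + r * (z - y) :=
        (Finset.sup'_lt_iff Finset.univ_nonempty).2 (fun i _ => by linarith [hz1 i])
      rw [slope_def_field]
      exact (div_lt_iff₀ (sub_pos.2 hz2)).2 (by linarith)
    · exact Finset.sup'_le _ _ (fun i _ => ha i)
    · intro y hy hfy
      refine (Finset.sup'_lt_iff (hact y)).2 (fun i hi => ?_)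
      rw [Finset.mem_filter] at hi
      have hgi : g i y = B y := le_antisymm ((hle i y).trans hfy.le)
        (hfy ▸ hi.2)
      exact bound y hy i hgi (fun j => (hle j y).trans hfy.le)
  intro x hx i
  exact (hle i x).trans (main x hx)
set_option maxHeartbeats 2000000 in
/-- The set `Ω = {(T,I,V) ∈ ℝ³₊ : T + I ≤ λ/min(d,δ), V ≤ (1-ε)pλ/(c·min(d,δ))}`
is positively invariant for the HCV model. -/
theorem hcv_positively_invariant_set
    (lam d beta delta p c eta eps : ℝ)
    (hlam : 0 ≤ lam) (hd : 0 < d) (hbeta : 0 ≤ beta) (hdelta : 0 < delta)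
    (hp : 0 ≤ p) (hc : 0 < c) (heta : eta ∈ Set.Icc (0:ℝ) 1) (heps : eps ∈ Set.Icc (0:ℝ) 1)
    (t₀ t₁ : ℝ) (T I V : ℝ → ℝ)
    (hT : ∀ t ∈ Set.Ico t₀ t₁,
      HasDerivAt T (lam - d * T t - (1 - eta) * beta * V t * T t) t)
    (hI : ∀ t ∈ Set.Ico t₀ t₁,
      HasDerivAt I ((1 - eta) * beta * V t * T t - delta * I t) t)
    (hV : ∀ t ∈ Set.Ico t₀ t₁,
      HasDerivAt V ((1 - eps) * p * I t - c * V t) t)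
    (h₀ : 0 ≤ T t₀ ∧ 0 ≤ I t₀ ∧ 0 ≤ V t₀ ∧
      T t₀ + I t₀ ≤ lam / min d delta ∧
      V t₀ ≤ (1 - eps) * p * lam / (c * min d delta)) :
    ∀ t ∈ Set.Ico t₀ t₁,
      0 ≤ T t ∧ 0 ≤ I t ∧ 0 ≤ V t ∧
      T t + I t ≤ lam / min d delta ∧
      V t ≤ (1 - eps) * p * lam / (c * min d delta) := by
  obtain ⟨hT0, hI0, hV0, hTI0, hVb0⟩ := h₀
  intro t ht
  obtain ⟨ht0, ht1⟩ := ht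
  set m := min d delta with hm_def
  have hm : 0 < m := lt_min hd hdelta
  have hmd : m ≤ d := min_le_left _ _
  have hmδ : m ≤ delta := min_le_right _ _
  set a : ℝ := lam / m with ha_def
  have hma : m * a = lam := by rw [ha_def]; field_simp
  set bV : ℝ := (1 - eps) * p * lam / (c * m) with hbV_def
  have hcb : c * bV = (1 - eps) * p * a := by
    rw [hbV_def, ha_def]; field_simp
  clear_value a bV
  clear_value m
  clear hm_def ha_def hbV_def
  have heps' : (0:ℝ) ≤ 1 - eps := by linarith [heps.2]
  have heta' : (0:ℝ) ≤ 1 - eta := by linarith [heta.2]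
  have hsub : Set.Icc t₀ t ⊆ Set.Ico t₀ t₁ := fun s hs => ⟨hs.1, lt_of_le_of_lt hs.2 ht1⟩
  -- a priori bound M on the compact interval
  have hTc : ContinuousOn T (Set.Icc t₀ t) :=
    fun s hs => (hT s (hsub hs)).continuousAt.continuousWithinAt
  have hIc : ContinuousOn I (Set.Icc t₀ t) :=
    fun s hs => (hI s (hsub hs)).continuousAt.continuousWithinAt
  have hVc : ContinuousOn V (Set.Icc t₀ t) :=
    fun s hs => (hV s (hsub hs)).continuousAt.continuousWithinAt
  obtain ⟨MT, hMT⟩ := isCompact_Icc.exists_bound_of_continuousOn hTc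
  obtain ⟨MI, hMI⟩ := isCompact_Icc.exists_bound_of_continuousOn hIc
  obtain ⟨MV, hMV⟩ := isCompact_Icc.exists_bound_of_continuousOn hVc
  set M : ℝ := max (max MT MI) (max MV 0) with hM_def
  have hM0 : (0:ℝ) ≤ M := le_trans (le_max_right _ _) (le_max_right _ _)
  have hMb : ∀ s ∈ Set.Icc t₀ t, |T s| ≤ M ∧ |I s| ≤ M ∧ |V s| ≤ M := by
    intro s hs
    refine ⟨le_trans (hMT s hs) ?_, le_trans (hMI s hs) ?_, le_trans (hMV s hs) ?_⟩
    · exact le_trans (le_max_left _ _) (le_max_left _ _)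
    · exact le_trans (le_max_right _ _) (le_max_left _ _)
    · exact le_trans (le_max_left _ _) (le_max_right _ _)
  clear_value M
  clear hM_def hMT hMI hMV
  set K : ℝ := 1 + (1 - eta) * beta * M + 2 * ((1 - eps) * p) + d + delta with hK_def
  clear_value K
  set g : Fin 5 → ℝ → ℝ :=
    ![fun s => -T s, fun s => -I s, fun s => -V s,
      fun s => T s + I s - a, fun s => V s - bV] with hg_def
  set g' : Fin 5 → ℝ → ℝ :=
    ![fun s => -(lam - d * T s - (1 - eta) * beta * V s * T s),
      fun s => -((1 - eta) * beta * V s * T s - delta * I s),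
      fun s => -((1 - eps) * p * I s - c * V s),
      fun s => (lam - d * T s - (1 - eta) * beta * V s * T s)
        + ((1 - eta) * beta * V s * T s - delta * I s),
      fun s => (1 - eps) * p * I s - c * V s] with hg'_def
  have key : ∀ σ > (0:ℝ), ∀ i, g i t ≤ σ * Real.exp (K * (t - t₀)) := by
    intro σ hσ i
    refine max_fence g g' (fun s => σ * Real.exp (K * (s - t₀)))
      (fun s => σ * Real.exp (K * (s - t₀)) * K) ?_ ?_ ?_ ?_ t ⟨ht0, le_refl t⟩ i
    · -- derivatives
      intro j x hx
      have hx' := hsub hx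
      fin_cases j
      · exact (hT x hx').neg
      · exact (hI x hx').neg
      · exact (hV x hx').neg
      · exact ((hT x hx').add (hI x hx')).sub_const a
      · exact (hV x hx').sub_const bV
    · -- initial condition
      intro j
      have hB0 : σ * Real.exp (K * (t₀ - t₀)) = σ := by simp
      show g j t₀ ≤ σ * Real.exp (K * (t₀ - t₀))
      rw [hB0]
      fin_cases j
      · show -T t₀ ≤ σ; linarith
      · show -I t₀ ≤ σ; linarith
      · show -V t₀ ≤ σ; linarith
      · show T t₀ + I t₀ - a ≤ σ; linarith
      · show V t₀ - bV ≤ σ; linarith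
    · -- derivative of the barrier
      intro x
      have h1 : HasDerivAt (fun s : ℝ => K * (s - t₀)) K x := by
        simpa using ((hasDerivAt_id x).sub_const t₀).const_mul K
      have h2 := h1.exp
      have h3 := h2.const_mul σ
      simpa [mul_assoc] using h3
    · -- the boundary bound
      intro x hx j hjeq hall
      have hx' : x ∈ Set.Icc t₀ t := ⟨hx.1, hx.2.le⟩
      obtain ⟨hTM, hIM, hVM⟩ := hMb x hx'
      rw [abs_le] at hTM hIM hVM
      have h0 : -T x ≤ σ * Real.exp (K * (x - t₀)) := hall 0
      have h1 : -I x ≤ σ * Real.exp (K * (x - t₀)) := hall 1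
      have h2 : -V x ≤ σ * Real.exp (K * (x - t₀)) := hall 2
      have h3 : T x + I x - a ≤ σ * Real.exp (K * (x - t₀)) := hall 3
      have h4 : V x - bV ≤ σ * Real.exp (K * (x - t₀)) := hall 4
      set Bx : ℝ := σ * Real.exp (K * (x - t₀)) with hBx_def
      have hBx : 0 < Bx := mul_pos hσ (Real.exp_pos _)
      have hBK : Bx * K =
          Bx * (1 + (1 - eta) * beta * M + 2 * ((1 - eps) * p) + d + delta) := by
        rw [hK_def]
      fin_cases j
      · -- T x = -Bx
        have hjeq' : -T x = Bx := hjeq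
        show -(lam - d * T x - (1 - eta) * beta * V x * T x) < Bx * K
        have hT' : T x = -Bx := by linarith
        have P0 : 0 ≤ (1 - eta) * beta * (V x + M) * Bx :=
          mul_nonneg (mul_nonneg (mul_nonneg heta' hbeta) (by linarith [hVM.1])) hBx.le
        rw [hT', hBK]
        nlinarith [P0, hBx, hlam, mul_nonneg (mul_nonneg heps' hp) hBx.le,
          mul_nonneg hdelta.le hBx.le]
      · -- I x = -Bx
        have hjeq' : -I x = Bx := hjeq
        show -((1 - eta) * beta * V x * T x - delta * I x) < Bx * K
        have hI' : I x = -Bx := by linarith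
        have hVT : V x * T x ≥ -(M * Bx) := by
          rcases le_or_gt 0 (T x) with h | h
          · nlinarith [mul_nonneg (by linarith : (0:ℝ) ≤ V x + Bx) h,
              mul_nonneg hBx.le (by linarith [hTM.2] : (0:ℝ) ≤ M - T x)]
          · nlinarith [mul_nonneg (by linarith [hVM.2] : (0:ℝ) ≤ M - V x)
              (by linarith : (0:ℝ) ≤ -T x),
              mul_nonneg hM0 (by linarith : (0:ℝ) ≤ T x + Bx)]
        have P1 : 0 ≤ (1 - eta) * beta * (V x * T x + M * Bx) :=
          mul_nonneg (mul_nonneg heta' hbeta) (by linarith)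
        rw [hI', hBK]
        nlinarith [P1, hBx, mul_nonneg (mul_nonneg heps' hp) hBx.le,
          mul_nonneg hdelta.le hBx.le, mul_nonneg hd.le hBx.le]
      · -- V x = -Bx
        have hjeq' : -V x = Bx := hjeq
        show -((1 - eps) * p * I x - c * V x) < Bx * K
        have hV' : V x = -Bx := by linarith
        have P2 : 0 ≤ (1 - eps) * p * (I x + Bx) :=
          mul_nonneg (mul_nonneg heps' hp) (by linarith)
        rw [hV', hBK]
        nlinarith [P2, hBx, mul_nonneg (mul_nonneg (mul_nonneg heta' hbeta) hM0) hBx.le,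
          mul_nonneg (mul_nonneg heps' hp) hBx.le,
          mul_nonneg hdelta.le hBx.le, mul_nonneg hd.le hBx.le, mul_nonneg hc.le hBx.le]
      · -- T x + I x = a + Bx
        have hjeq' : T x + I x - a = Bx := hjeq
        show (lam - d * T x - (1 - eta) * beta * V x * T x)
          + ((1 - eta) * beta * V x * T x - delta * I x) < Bx * K
        have P3 : 0 ≤ (d - m) * (T x + Bx) :=
          mul_nonneg (by linarith) (by linarith)
        have P4 : 0 ≤ (delta - m) * (I x + Bx) :=
          mul_nonneg (by linarith) (by linarith)
        rw [hBK]
        nlinarith [P3, P4, hBx, mul_pos hm hBx, hma,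
          mul_nonneg (mul_nonneg (mul_nonneg heta' hbeta) hM0) hBx.le,
          mul_nonneg (mul_nonneg heps' hp) hBx.le]
      · -- V x = bV + Bx
        have hjeq' : V x - bV = Bx := hjeq
        show (1 - eps) * p * I x - c * V x < Bx * K
        have hV' : V x = bV + Bx := by linarith
        have P5 : 0 ≤ (1 - eps) * p * (a + 2 * Bx - I x) :=
          mul_nonneg (mul_nonneg heps' hp) (by linarith)
        rw [hV', hBK]
        nlinarith [P5, hBx, hcb, mul_nonneg hc.le hBx.le,
          mul_nonneg (mul_nonneg (mul_nonneg heta' hbeta) hM0) hBx.le,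
          mul_nonneg hdelta.le hBx.le, mul_nonneg hd.le hBx.le]
  have hfin : ∀ i, g i t ≤ 0 := by
    intro i
    by_contra h
    push_neg at h
    have hC : 0 < Real.exp (K * (t - t₀)) := Real.exp_pos _
    have hkey := key (g i t / (2 * Real.exp (K * (t - t₀)))) (div_pos h (by positivity)) i
    have heq : g i t / (2 * Real.exp (K * (t - t₀))) * Real.exp (K * (t - t₀))
        = g i t / 2 := by field_simp
    rw [heq] at hkey
    linarith
  have e0 : -T t ≤ 0 := hfin 0
  have e1 : -I t ≤ 0 := hfin 1
  have e2 : -V t ≤ 0 := hfin 2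
  have e3 : T t + I t - a ≤ 0 := hfin 3
  have e4 : V t - bV ≤ 0 := hfin 4
  exact ⟨by linarith, by linarith, by linarith, by linarith, by linarith⟩
end

section
/- Define R₀ = (1-η)(1-ε)λpβ/(cdδ). If R₀ > 1, then the point E* = (T*, I*, V*) with T* = cδ/((1-η)β(1-ε)p), I* = ((1-ε)(1-η)λpβ - dcδ)/((1-η)(1-ε)pβδ), V* = ((1-η)(1-ε)λpβ - dcδ)/((1-η)δcβ) is an equilibrium of the HCV model with all three coordinates positive. -/
/-- If `R₀ > 1`, the infected point `E* = (T*, I*, V*)` is an equilibrium of the HCV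
model with all three coordinates positive. -/
theorem hcv_infected_equilibrium
    (lam d beta delta p c eta eps : ℝ)
    (hlam : 0 < lam) (hd : 0 < d) (hbeta : 0 < beta) (hdelta : 0 < delta)
    (hp : 0 < p) (hc : 0 < c) (heta : eta ∈ Set.Ico (0:ℝ) 1) (heps : eps ∈ Set.Ico (0:ℝ) 1)
    (hR₀ : 1 < (1 - eta) * (1 - eps) * lam * p * beta / (c * d * delta)) :
    let Tstar := c * delta / ((1 - eta) * beta * (1 - eps) * p)
    let Istar := ((1 - eps) * (1 - eta) * lam * p * beta - d * c * delta) /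
      ((1 - eta) * (1 - eps) * p * beta * delta)
    let Vstar := ((1 - eta) * (1 - eps) * lam * p * beta - d * c * delta) /
      ((1 - eta) * delta * c * beta)
    (0 < Tstar ∧ 0 < Istar ∧ 0 < Vstar) ∧
    lam - d * Tstar - (1 - eta) * beta * Vstar * Tstar = 0 ∧
    (1 - eta) * beta * Vstar * Tstar - delta * Istar = 0 ∧
    (1 - eps) * p * Istar - c * Vstar = 0 := by
  obtain ⟨heta0, heta1⟩ := heta
  obtain ⟨heps0, heps1⟩ := heps
  have h1 : (0:ℝ) < 1 - eta := by linarith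
  have h2 : (0:ℝ) < 1 - eps := by linarith
  have hnum : 0 < (1 - eps) * (1 - eta) * lam * p * beta - d * c * delta := by
    have hden : 0 < c * d * delta := by positivity
    rw [lt_div_iff₀ hden] at hR₀
    nlinarith
  have hI : 0 < ((1 - eps) * (1 - eta) * lam * p * beta - d * c * delta) /
      ((1 - eta) * (1 - eps) * p * beta * delta) := div_pos (by linarith) (by positivity)
  have hV : 0 < ((1 - eta) * (1 - eps) * lam * p * beta - d * c * delta) /
      ((1 - eta) * delta * c * beta) := div_pos (by nlinarith) (by positivity)
  refine ⟨⟨by positivity, hI, hV⟩, ?_, ?_, ?_⟩ <;>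
    field_simp <;> ring
end

section
/- Let (T, I, V) be a positive solution of the HCV model, T⁰ = λ/d, and L₁(T,I,V) = T - T⁰ - T⁰·ln(T/T⁰) + I + (δ/((1-ε)p))·V. Then along solutions, dL₁/dt = λ(2 - T/T⁰ - T⁰/T) + (R₀ - 1)·(cδ/((1-ε)p))·V, where R₀ = (1-η)(1-ε)λpβ/(cdδ). -/
/-- Derivative of the Lyapunov function `L₁` along positive solutions of the HCV model:
`dL₁/dt = λ(2 - T/T⁰ - T⁰/T) + (R₀ - 1)(cδ/((1-ε)p)) V`. -/
theorem hcv_lyapunov_L1_derivative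
    (lam d beta delta p c eta eps : ℝ)
    (hlam : 0 < lam) (hd : 0 < d) (hbeta : 0 < beta) (hdelta : 0 < delta)
    (hp : 0 < p) (hc : 0 < c) (heta : eta ∈ Set.Ico (0:ℝ) 1) (heps : eps ∈ Set.Ico (0:ℝ) 1)
    (T I V : ℝ → ℝ) (t : ℝ)
    (hpos : 0 < T t ∧ 0 < I t ∧ 0 < V t)
    (hT : HasDerivAt T (lam - d * T t - (1 - eta) * beta * V t * T t) t)
    (hI : HasDerivAt I ((1 - eta) * beta * V t * T t - delta * I t) t)
    (hV : HasDerivAt V ((1 - eps) * p * I t - c * V t) t) :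
    let T0 := lam / d
    let R₀ := (1 - eta) * (1 - eps) * lam * p * beta / (c * d * delta)
    HasDerivAt (fun s => T s - T0 - T0 * Real.log (T s / T0) + I s +
        (delta / ((1 - eps) * p)) * V s)
      (lam * (2 - T t / T0 - T0 / T t) + (R₀ - 1) * (c * delta / ((1 - eps) * p)) * V t)
      t := by
  intro T0 R₀
  obtain ⟨hTpos, hIpos, hVpos⟩ := hpos
  have heps1 : (0:ℝ) < 1 - eps := by linarith [heps.2]
  have hT0 : (0:ℝ) < T0 := div_pos hlam hd
  have hdiv : T t / T0 ≠ 0 := ne_of_gt (div_pos hTpos hT0)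
  have hlog : HasDerivAt (fun s => Real.log (T s / T0))
      (((lam - d * T t - (1 - eta) * beta * V t * T t) / T0) / (T t / T0)) t :=
    (hT.div_const T0).log hdiv
  have hD := (((hT.sub_const T0).sub (hlog.const_mul T0)).add hI).add
      ((hV.const_mul (delta / ((1 - eps) * p))))
  refine hD.congr_deriv ?_
  have h1 : T t ≠ 0 := ne_of_gt hTpos
  have h2 : (1 - eps) * p ≠ 0 := by positivity
  simp only [T0, R₀]
  field_simp
  ring
end

section
/- If R₀ ≤ 1, T > 0, V ≥ 0, and λ(2 - T/T⁰ - T⁰/T) + (R₀ - 1)·(cδ/((1-ε)p))·V = 0 with T⁰ = λ/d, then T = T⁰, and moreover if R₀ < 1 then V = 0. -/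
/-- Zero set of the Lyapunov derivative: if `R₀ ≤ 1` and the derivative vanishes, then
`T = T⁰`; and if moreover `R₀ < 1` then also `V = 0`. -/
theorem hcv_lyapunov_L1_derivative_zero_set
    (lam d beta delta p c eta eps : ℝ)
    (hlam : 0 < lam) (hd : 0 < d) (hbeta : 0 < beta) (hdelta : 0 < delta)
    (hp : 0 < p) (hc : 0 < c) (heta : eta ∈ Set.Ico (0:ℝ) 1) (heps : eps ∈ Set.Ico (0:ℝ) 1)
    (hR₀ : (1 - eta) * (1 - eps) * lam * p * beta / (c * d * delta) ≤ 1)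
    (T V : ℝ) (hT : 0 < T) (hV : 0 ≤ V)
    (hzero : lam * (2 - T / (lam / d) - (lam / d) / T) +
      ((1 - eta) * (1 - eps) * lam * p * beta / (c * d * delta) - 1) *
        (c * delta / ((1 - eps) * p)) * V = 0) :
    T = lam / d ∧
    ((1 - eta) * (1 - eps) * lam * p * beta / (c * d * delta) < 1 → V = 0) := by
  set R := (1 - eta) * (1 - eps) * lam * p * beta / (c * d * delta) with hR
  set T0 : ℝ := lam / d with hT0
  have hT0pos : 0 < T0 := div_pos hlam hd
  have hkpos : 0 < c * delta / ((1 - eps) * p) := by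
    apply div_pos (mul_pos hc hdelta)
    exact mul_pos (by linarith [heps.2]) hp
  -- first term ≤ 0
  have ha : lam * (2 - T / T0 - T0 / T) ≤ 0 := by
    have h1 : 2 - T / T0 - T0 / T ≤ 0 := by
      have key : T / T0 + T0 / T - 2 = (T - T0)^2 / (T * T0) := by
        field_simp
        ring
      have : 0 ≤ (T - T0)^2 / (T * T0) :=
        div_nonneg (sq_nonneg _) (le_of_lt (mul_pos hT hT0pos))
      linarith [key ▸ this]
    exact mul_nonpos_of_nonneg_of_nonpos hlam.le h1
  have hb : (R - 1) * (c * delta / ((1 - eps) * p)) * V ≤ 0 := by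
    apply mul_nonpos_of_nonpos_of_nonneg _ hV
    exact mul_nonpos_of_nonpos_of_nonneg (by linarith) hkpos.le
  have ha0 : lam * (2 - T / T0 - T0 / T) = 0 := by linarith
  have hb0 : (R - 1) * (c * delta / ((1 - eps) * p)) * V = 0 := by linarith
  constructor
  · have h1 : 2 - T / T0 - T0 / T = 0 := by
      rcases mul_eq_zero.mp ha0 with h | h
      · exact absurd h hlam.ne'
      · exact h
    have key : T / T0 + T0 / T - 2 = (T - T0)^2 / (T * T0) := by
      field_simp; ring
    have : (T - T0)^2 / (T * T0) = 0 := by linarith [key]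
    have h2 : (T - T0)^2 = 0 := by
      have := (div_eq_zero_iff.mp this)
      rcases this with h | h
      · exact h
      · exact absurd h (mul_pos hT hT0pos).ne'
    have := pow_eq_zero_iff (n := 2) (by norm_num) |>.mp h2
    linarith
  · intro hRlt
    rcases mul_eq_zero.mp hb0 with h | h
    · exact absurd h (mul_neg_of_neg_of_pos (by linarith) hkpos).ne
    · exact h
end

section
/- Let (T*, I*, V*) be the infected equilibrium of the HCV model with R₀ > 1, and let L₂(T,I,V) = T - T* - T*·ln(T/T*) + I - I* - I*·ln(I/I*) + (δ/((1-ε)p))·(V - V* - V*·ln(V/V*)). Then along positive solutions, dL₂/dt = dT*(2 - T/T* - T*/T) + δI*(3 - T*/T - V*I/(VI*) - VTI*/(V*T*I)), which is ≤ 0. -/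
lemma amgm3 (u v w : ℝ) (hu : 0 < u) (hv : 0 < v) (hw : 0 < w) (h : u * v * w = 1) :
    3 ≤ u + v + w := by
  nlinarith [sq_nonneg (u - v), sq_nonneg (v - w), sq_nonneg (u - w),
    sq_nonneg (u + v + w - 3), mul_pos hu hv, mul_pos hv hw,
    sq_nonneg (u*v - 1), sq_nonneg (v*w - 1), sq_nonneg (u*w - 1)]

lemma entropy_deriv (f : ℝ → ℝ) (f' a : ℝ) (t : ℝ) (hf : HasDerivAt f f' t)
    (hft : 0 < f t) (ha : 0 < a) :
    HasDerivAt (fun s => f s - a - a * Real.log (f s / a)) (f' * (1 - a / f t)) t := by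
  have hq : HasDerivAt (fun s => f s / a) (f' / a) t := hf.div_const a
  have hne : f t / a ≠ 0 := by positivity
  have hlog : HasDerivAt (fun s => Real.log (f s / a)) ((f' / a) / (f t / a)) t :=
    hq.log hne
  have := (hf.sub_const a).sub (hlog.const_mul a)
  refine this.congr_deriv ?_
  field_simp

lemma hcv_key (d delta a b c lam τ ι ν x y z : ℝ)
    (hx : 0 < x) (hy : 0 < y) (hz : 0 < z) (hτ : 0 < τ) (hι : 0 < ι) (hν : 0 < ν)
    (hb : 0 < b)
    (e1 : lam = d * τ + delta * ι) (e2 : delta * ι = a * ν * τ) (e3 : b * ι = c * ν) :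
    d * τ * (2 - x / τ - τ / x) +
      delta * ι * (3 - τ / x - ν * y / (z * ι) - z * x * ι / (ν * τ * y))
    = (lam - d * x - a * z * x) * (1 - τ / x) + (a * z * x - delta * y) * (1 - ι / y) +
      delta / b * ((b * y - c * z) * (1 - ν / z)) := by
  subst e1
  have ha : a = delta * ι / (ν * τ) := by field_simp; linarith [e2]
  have hcc : c = b * ι / ν := by field_simp; linarith [e3]
  subst ha hcc
  field_simp
  ring

/-- Derivative of the Lyapunov function `L₂` along positive solutions of the HCV model:
`dL₂/dt = dT*(2 - T/T* - T*/T) + δI*(3 - T*/T - V*I/(VI*) - VTI*/(V*T*I)) ≤ 0`. -/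
theorem hcv_lyapunov_L2_derivative
    (lam d beta delta p c eta eps : ℝ)
    (hlam : 0 < lam) (hd : 0 < d) (hbeta : 0 < beta) (hdelta : 0 < delta)
    (hp : 0 < p) (hc : 0 < c) (heta : eta ∈ Set.Ico (0:ℝ) 1) (heps : eps ∈ Set.Ico (0:ℝ) 1)
    (hR₀ : 1 < (1 - eta) * (1 - eps) * lam * p * beta / (c * d * delta))
    (T I V : ℝ → ℝ) (t : ℝ)
    (hpos : 0 < T t ∧ 0 < I t ∧ 0 < V t)
    (hT : HasDerivAt T (lam - d * T t - (1 - eta) * beta * V t * T t) t)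
    (hI : HasDerivAt I ((1 - eta) * beta * V t * T t - delta * I t) t)
    (hV : HasDerivAt V ((1 - eps) * p * I t - c * V t) t) :
    let R₀ := (1 - eta) * (1 - eps) * lam * p * beta / (c * d * delta)
    let Tstar := c * delta / ((1 - eta) * (1 - eps) * beta * p)
    let Istar := (c * d / ((1 - eta) * (1 - eps) * p * beta)) * (R₀ - 1)
    let Vstar := (d / ((1 - eta) * beta)) * (R₀ - 1)
    let D := d * Tstar * (2 - T t / Tstar - Tstar / T t) +
      delta * Istar * (3 - Tstar / T t - Vstar * I t / (V t * Istar) -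
        V t * T t * Istar / (Vstar * Tstar * I t))
    HasDerivAt (fun s => T s - Tstar - Tstar * Real.log (T s / Tstar) +
        (I s - Istar - Istar * Real.log (I s / Istar)) +
        (delta / ((1 - eps) * p)) * (V s - Vstar - Vstar * Real.log (V s / Vstar)))
      D t ∧ D ≤ 0 := by
  obtain ⟨hTt, hIt, hVt⟩ := hpos
  have h1e : 0 < 1 - eta := by have := heta.2; linarith
  have h1p : 0 < 1 - eps := by have := heps.2; linarith
  have hR : 0 < (1 - eta) * (1 - eps) * lam * p * beta / (c * d * delta) - 1 := by linarith
  intro R₀ Tstar Istar Vstar D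
  have hTs : 0 < Tstar := by unfold Tstar; positivity
  have hIs : 0 < Istar := by unfold Istar R₀; positivity
  have hVs : 0 < Vstar := by unfold Vstar R₀; positivity
  -- equilibrium identities
  have hcd : c * d * delta ≠ 0 := by positivity
  have id1 : lam = d * Tstar + delta * Istar := by
    unfold Tstar Istar R₀
    field_simp
    ring
  have id2 : delta * Istar = (1 - eta) * beta * Vstar * Tstar := by
    unfold Tstar Istar Vstar R₀
    field_simp
  have id3 : (1 - eps) * p * Istar = c * Vstar := by
    unfold Istar Vstar R₀
    field_simp
  -- the derivative
  have hd1 := entropy_deriv T _ Tstar t hT hTt hTs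
  have hd2 := entropy_deriv I _ Istar t hI hIt hIs
  have hd3 := entropy_deriv V _ Vstar t hV hVt hVs
  have hDeriv := (hd1.add hd2).add (hd3.const_mul (delta / ((1 - eps) * p)))
  constructor
  · refine hDeriv.congr_deriv (Eq.symm ?_)
    unfold D
    linear_combination hcv_key d delta ((1 - eta) * beta) ((1 - eps) * p) c lam
      Tstar Istar Vstar (T t) (I t) (V t) hTt hIt hVt hTs hIs hVs (by positivity)
      id1 id2 id3
  · unfold D
    have hu : 0 < Tstar / T t := by positivity
    have hv : 0 < Vstar * I t / (V t * Istar) := by positivity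
    have hw : 0 < V t * T t * Istar / (Vstar * Tstar * I t) := by positivity
    have hprod : (Tstar / T t) * (Vstar * I t / (V t * Istar)) *
        (V t * T t * Istar / (Vstar * Tstar * I t)) = 1 := by
      field_simp
    have h3 := amgm3 _ _ _ hu hv hw hprod
    have h2 : 2 ≤ T t / Tstar + Tstar / T t := by
      rw [div_add_div _ _ (ne_of_gt hTs) (ne_of_gt hTt), le_div_iff₀ (by positivity)]
      nlinarith [sq_nonneg (T t - Tstar)]
    nlinarith [mul_pos hd hTs, mul_pos hdelta hIs]
end

section
/- For positive reals T, I, V, T*, I*, V* with d, δ > 0, the expression dT*(2 - T/T* - T*/T) + δI*(3 - T*/T - V*I/(VI*) - VTI*/(V*T*I)) equals zero if and only if T = T*, I/I* = V/V*. -/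
set_option maxHeartbeats 1000000 in
private lemma amgm3' (x y z : ℝ) (hx : 0 < x) (hy : 0 < y) (hz : 0 < z) (h : x * y * z = 1) :
    3 ≤ x + y + z := by
  nlinarith [mul_nonneg (sq_nonneg (x - y)) hz.le, mul_nonneg (sq_nonneg (y - z)) hx.le,
    mul_nonneg (sq_nonneg (x - z)) hy.le, sq_nonneg (x + y + z - 3), sq_nonneg (x - 1),
    sq_nonneg (y - 1), sq_nonneg (z - 1), mul_pos hx hy, mul_pos hy hz, mul_pos hx hz]

/-- Equality case of the Lyapunov derivative at the infected equilibrium: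
`dT*(2 - T/T* - T*/T) + δI*(3 - T*/T - V*I/(VI*) - VTI*/(V*T*I)) = 0`
iff `T = T*` and `I/I* = V/V*`. -/
theorem hcv_lyapunov_L2_derivative_zero_iff
    (d delta T I V Tstar Istar Vstar : ℝ)
    (hd : 0 < d) (hdelta : 0 < delta)
    (hT : 0 < T) (hI : 0 < I) (hV : 0 < V)
    (hTs : 0 < Tstar) (hIs : 0 < Istar) (hVs : 0 < Vstar) :
    d * Tstar * (2 - T / Tstar - Tstar / T) +
      delta * Istar * (3 - Tstar / T - Vstar * I / (V * Istar) -
        V * T * Istar / (Vstar * Tstar * I)) = 0 ↔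
    T = Tstar ∧ I / Istar = V / Vstar := by
  constructor
  · intro h
    -- the two bracketed quantities are nonpositive
    have h2 : 2 - T / Tstar - Tstar / T ≤ 0 := by
      have h1 : 2 ≤ T / Tstar + Tstar / T := by
        rw [div_add_div _ _ hTs.ne' hT.ne', le_div_iff₀ (mul_pos hTs hT)]
        nlinarith [sq_nonneg (T - Tstar)]
      linarith
    have hx : 0 < Tstar / T := div_pos hTs hT
    have hy : 0 < Vstar * I / (V * Istar) := div_pos (mul_pos hVs hI) (mul_pos hV hIs)
    have hz : 0 < V * T * Istar / (Vstar * Tstar * I) :=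
      div_pos (mul_pos (mul_pos hV hT) hIs) (mul_pos (mul_pos hVs hTs) hI)
    have hprod : (Tstar / T) * (Vstar * I / (V * Istar)) * (V * T * Istar / (Vstar * Tstar * I)) = 1 := by
      field_simp
    have h3 : 3 - Tstar / T - Vstar * I / (V * Istar) - V * T * Istar / (Vstar * Tstar * I) ≤ 0 := by
      have := amgm3' _ _ _ hx hy hz hprod
      linarith
    have hA : d * Tstar * (2 - T / Tstar - Tstar / T) ≤ 0 :=
      mul_nonpos_of_nonneg_of_nonpos (by positivity) h2
    have hB : delta * Istar * (3 - Tstar / T - Vstar * I / (V * Istar) -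
        V * T * Istar / (Vstar * Tstar * I)) ≤ 0 :=
      mul_nonpos_of_nonneg_of_nonpos (by positivity) h3
    have hA0 : 2 - T / Tstar - Tstar / T = 0 := by
      have hA' : d * Tstar * (2 - T / Tstar - Tstar / T) = 0 := by linarith
      have := mul_pos hd hTs
      exact (mul_eq_zero.mp hA').resolve_left (by positivity)
    have hTT : T = Tstar := by
      have hsq : (T - Tstar) ^ 2 = 0 := by
        field_simp at hA0
        nlinarith [hA0]
      have := pow_eq_zero_iff (n := 2) (by norm_num) |>.mp hsq
      linarith
    subst hTT
    have hB0 : 3 - T / T - Vstar * I / (V * Istar) -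
        V * T * Istar / (Vstar * T * I) = 0 := by
      have hB' : delta * Istar * (3 - T / T - Vstar * I / (V * Istar) -
          V * T * Istar / (Vstar * T * I)) = 0 := by linarith
      exact (mul_eq_zero.mp hB').resolve_left (by positivity)
    refine ⟨rfl, ?_⟩
    have hsq : (I * Vstar - V * Istar) ^ 2 = 0 := by
      rw [div_self hT.ne'] at hB0
      field_simp at hB0
      nlinarith [hB0]
    have hEq : I * Vstar = V * Istar := by
      have := pow_eq_zero_iff (n := 2) (by norm_num) |>.mp hsq
      linarith
    rw [div_eq_div_iff hIs.ne' hVs.ne']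
    linarith
  · rintro ⟨rfl, h2⟩
    have hEq : I * Vstar = V * Istar := (div_eq_div_iff hIs.ne' hVs.ne').mp h2
    have e0 : T / T = 1 := div_self hT.ne'
    have e1 : Vstar * I / (V * Istar) = 1 := by
      rw [div_eq_one_iff_eq (by positivity)]; linarith
    have e2 : V * T * Istar / (Vstar * T * I) = 1 := by
      rw [div_eq_one_iff_eq (by positivity)]; ring_nf; nlinarith [hEq]
    rw [e0, e1, e2]
    ring
end
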